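/- arXiv:1310.3650 — 3 statements merged into one kernel-verified Lean document; each statement's English description precedes it below -/
import Mathlib

section
/- Let Y be an integrable real random variable with E[Y] < 0 and P(Y = 0) < 1. Let f, g ∈ ℂ[X] be coprime polynomials with deg f < deg g, and suppose there exists ε > 0 such that for every s ∈ ℂ with −ε ≤ Re s ≤ 0 the random variable e^{−sY} is integrable and g(s)·E[e^{−sY}] = f(s). Then the number of roots of g with Re s ≥ 0 (counted with multiplicity) equals the number of roots of g − f with Re s ≥ 0 (counted with multiplicity). -/
/-!
Dominated convergence (with the bound given by convexity of `δ ↦ e^{δY}`) gives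
`E[e^{δY}] = 1 + δ E[Y] + o(δ)` as `δ ↓ 0`, so `E[e^{δY}] < 1` for small `δ > 0`, and then
`|E[e^{-sY}]| < 1` on the line `Re s = -δ`. There `g - t f = g (1 - t E[e^{-sY}])` with `g ≠ 0` by
coprimality, so for `t ∈ [0, 1]` no `g - t f` has a root on the line. These polynomials all have the
degree and leading coefficient of `g`, so their roots move continuously with `t` and the number of
them in `Re s > -δ` is constant. For `δ` small enough, `Re s > -δ` and `Re s ≥ 0` contain the same
roots of `g` and of `g - f`.
-/

open MeasureTheory ProbabilityTheory Polynomial Filter Topology Set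

theorem Multiset.exists_eq_map_univ {α : Type*} {n : ℕ} {m : Multiset α} (hm : m.card = n) :
    ∃ v : Fin n → α, m = Finset.univ.val.map v := by
  subst hm
  refine ⟨fun i => m.toList.get (i.cast m.length_toList.symm), ?_⟩
  conv_lhs => rw [← m.coe_toList]
  rw [Fin.univ_val_map]
  congr 1
  exact List.ext_get (by simp) (by simp)

theorem Multiset.card_filter_map_univ {α : Type*} {n : ℕ} (v : Fin n → α) (q : α → Prop)
    [DecidablePred q] :
    ((Finset.univ.val.map v).filter q).card = (Finset.univ.filter fun i => q (v i)).card := by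
  rw [Multiset.filter_map, Multiset.card_map]
  rfl

theorem Filter.Tendsto.eventually_mem_iff_of_notMem_frontier {X ι : Type*} [TopologicalSpace X]
    {U : Set X} {l : Filter ι} {x : ι → X} {a : X} (hx : Tendsto x l (𝓝 a))
    (ha : a ∉ frontier U) : ∀ᶠ k in l, x k ∈ U ↔ a ∈ U := by
  by_cases haU : a ∈ U
  · have : U ∈ 𝓝 a := mem_interior_iff_mem_nhds.1 (by
      by_contra h; exact ha ⟨subset_closure haU, h⟩)
    filter_upwards [hx this] with k hk using iff_of_true hk haU
  · have : Uᶜ ∈ 𝓝 a := by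
      rw [← mem_interior_iff_mem_nhds, interior_compl]
      exact fun h => ha ⟨h, fun hi => haU (interior_subset hi)⟩
    filter_upwards [hx this] with k hk using iff_of_false hk haU

namespace Polynomial

theorem eq_C_leadingCoeff_mul_prod {n : ℕ} {p : ℂ[X]} {v : Fin n → ℂ}
    (hv : p.roots = Finset.univ.val.map v) :
    p = C p.leadingCoeff * ∏ i, (X - C (v i)) := by
  conv_lhs =>
    rw [← C_leadingCoeff_mul_prod_multiset_X_sub_C (p := p) IsAlgClosed.card_roots_eq_natDegree]
  rw [hv, Multiset.map_map, Finset.prod_eq_multiset_prod]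
  rfl

theorem roots_C_mul_prod_X_sub_C {n : ℕ} {c : ℂ} (hc : c ≠ 0) (v : Fin n → ℂ) :
    (C c * ∏ i, (X - C (v i))).roots = Finset.univ.val.map v := by
  rw [roots_C_mul _ hc, Finset.prod_eq_multiset_prod]
  simpa [Multiset.map_map, Function.comp_def] using
    roots_multiset_prod_X_sub_C (Finset.univ.val.map v)

theorem eq_C_mul_prod_of_tendsto {ι : Type*} {l : Filter ι} [l.NeBot] {n : ℕ} {c : ℂ}
    {v : ι → Fin n → ℂ} {w : Fin n → ℂ} (hw : Tendsto v l (𝓝 w)) {P : ι → ℂ[X]} {p : ℂ[X]}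
    (hP : ∀ k, P k = C c * ∏ i, (X - C (v k i)))
    (hp : ∀ z, Tendsto (fun k => (P k).eval z) l (𝓝 (p.eval z))) :
    p = C c * ∏ i, (X - C (w i)) := by
  refine Polynomial.funext fun z => tendsto_nhds_unique (hp z) ?_
  simp only [hP, eval_mul, eval_C, eval_prod, eval_sub, eval_X]
  exact tendsto_const_nhds.mul <| tendsto_finsetProd _ fun i _ =>
    tendsto_const_nhds.sub ((continuous_apply i).continuousAt.tendsto.comp hw)

variable {f g : ℂ[X]}

theorem degree_sub_smul (hdeg : f.degree < g.degree) (a : ℂ) :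
    (g - a • f).degree = g.degree :=
  degree_sub_eq_left_of_degree_lt ((degree_smul_le a f).trans_lt hdeg)

theorem leadingCoeff_sub_smul (hdeg : f.degree < g.degree) (a : ℂ) :
    (g - a • f).leadingCoeff = g.leadingCoeff :=
  leadingCoeff_sub_of_degree_lt ((degree_smul_le a f).trans_lt hdeg)

theorem exists_nnnorm_le_of_mem_roots_sub_smul (hdeg : f.degree < g.degree) :
    ∃ B : NNReal, ∀ a : ℂ, ‖a‖₊ ≤ 1 → ∀ r ∈ (g - a • f).roots, ‖r‖₊ ≤ B := by
  refine ⟨(Finset.range g.natDegree).sup (fun i => ‖g.coeff i‖₊ + ‖f.coeff i‖₊) /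
    ‖g.leadingCoeff‖₊ + 1, fun a ha r hr => ?_⟩
  have hp : g - a • f ≠ 0 := (mem_roots'.1 hr).1
  refine (((mem_roots hp).1 hr).norm_lt_cauchyBound hp).le.trans ?_
  rw [cauchyBound, natDegree_eq_of_degree_eq (degree_sub_smul hdeg a),
    leadingCoeff_sub_smul hdeg a]
  gcongr with i
  calc ‖(g - a • f).coeff i‖₊ ≤ ‖g.coeff i‖₊ + ‖a‖₊ * ‖f.coeff i‖₊ := by
        simpa only [coeff_sub, coeff_smul, smul_eq_mul, nnnorm_mul] using
          nnnorm_sub_le (g.coeff i) (a * f.coeff i)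
    _ ≤ ‖g.coeff i‖₊ + ‖f.coeff i‖₊ := by
        gcongr; exact mul_le_of_le_one_left zero_le ha

theorem eventually_card_filter_roots_sub_smul_eq (hdeg : f.degree < g.degree) {U : Set ℂ}
    [DecidablePred (· ∈ U)] {t₀ : ℝ} (hU : ∀ s ∈ frontier U, (g - (t₀ : ℂ) • f).eval s ≠ 0) :
    ∀ᶠ t : ℝ in 𝓝[Icc 0 1] t₀, ((g - (t : ℂ) • f).roots.filter (· ∈ U)).card =
      ((g - (t₀ : ℂ) • f).roots.filter (· ∈ U)).card := by
  -- A sequence `u k → t₀` violating the claim has root vectors in a compact ball; at the limit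
  -- of a subsequence they form the root vector of `g - t₀ • f`, which avoids `frontier U`.
  by_contra hcon
  obtain ⟨u, hu, hu'⟩ := exists_seq_forall_of_frequently
    ((not_eventually.1 hcon).and_eventually self_mem_nhdsWithin)
  obtain ⟨B, hB⟩ := exists_nnnorm_le_of_mem_roots_sub_smul hdeg
  choose v hv using fun k => Multiset.exists_eq_map_univ (IsAlgClosed.card_roots_eq_natDegree.trans
    (natDegree_eq_of_degree_eq (degree_sub_smul hdeg (u k : ℂ))))
  have hv_mem : ∀ k, v k ∈ Metric.closedBall 0 B := fun k => by
    rw [mem_closedBall_zero_iff, ← coe_nnnorm, NNReal.coe_le_coe, pi_nnnorm_le_iff]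
    refine fun i => hB _ ?_ _ (hv k ▸ Multiset.mem_map_of_mem _ (Finset.mem_univ i))
    rw [← NNReal.coe_le_coe, coe_nnnorm, Complex.norm_real, Real.norm_of_nonneg (hu' k).2.1]
    exact (hu' k).2.2
  obtain ⟨w, -, φ, hφ, hw⟩ := (isCompact_closedBall _ _).tendsto_subseq hv_mem
  have hw_roots : (g - (t₀ : ℂ) • f).roots = Finset.univ.val.map w := by
    have hlim : ∀ z, Tendsto (fun k => (g - (u (φ k) : ℂ) • f).eval z) atTop
        (𝓝 ((g - (t₀ : ℂ) • f).eval z)) := by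
      intro z
      simp only [eval_sub, eval_smul, smul_eq_mul]
      exact tendsto_const_nhds.sub (((Complex.continuous_ofReal.tendsto t₀).comp
        ((tendsto_nhdsWithin_iff.1 hu).1.comp hφ.tendsto_atTop)).mul tendsto_const_nhds)
    rw [eq_C_mul_prod_of_tendsto (P := fun k => g - (u (φ k) : ℂ) • f) (c := g.leadingCoeff) hw
      (fun k => by rw [eq_C_leadingCoeff_mul_prod (hv (φ k)), leadingCoeff_sub_smul hdeg]; rfl)
      hlim]
    exact roots_C_mul_prod_X_sub_C (by simpa using hdeg.ne_bot) w
  have hw_frontier : ∀ i, w i ∉ frontier U := fun i hi => hU _ hi <| isRoot_of_mem_roots <|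
    hw_roots ▸ Multiset.mem_map_of_mem w (Finset.mem_univ i)
  obtain ⟨k, hk⟩ := (eventually_all.2 fun i => ((continuous_apply i).continuousAt.tendsto.comp
    hw).eventually_mem_iff_of_notMem_frontier (hw_frontier i)).exists
  refine (hu' (φ k)).1 ?_
  rw [hv, hw_roots, Multiset.card_filter_map_univ, Multiset.card_filter_map_univ]
  exact congrArg Finset.card (Finset.filter_congr fun i _ => hk i)

theorem card_filter_roots_eq_card_filter_roots_sub (hdeg : f.degree < g.degree) {U : Set ℂ}
    [DecidablePred (· ∈ U)]
    (hU : ∀ t ∈ Icc (0 : ℝ) 1, ∀ s ∈ frontier U, (g - (t : ℂ) • f).eval s ≠ 0) :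
    (g.roots.filter (· ∈ U)).card = ((g - f).roots.filter (· ∈ U)).card := by
  have hcont : ContinuousOn (fun t : ℝ => ((g - (t : ℂ) • f).roots.filter (· ∈ U)).card)
      (Icc 0 1) := by
    intro t ht
    simpa only [ContinuousWithinAt, nhds_discrete, tendsto_pure] using
      eventually_card_filter_roots_sub_smul_eq hdeg (hU t ht)
  simpa using isPreconnected_Icc.constant hcont (left_mem_Icc.2 zero_le_one)
    (right_mem_Icc.2 zero_le_one)

theorem eval_sub_smul_ne_zero (hcop : IsCoprime f g) {s I : ℂ} (hI : ‖I‖ < 1)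
    (hs : g.eval s * I = f.eval s) {a : ℂ} (ha : ‖a‖ ≤ 1) : (g - a • f).eval s ≠ 0 := by
  have hg : g.eval s ≠ 0 := fun hg => by
    simpa [hg, ← hs] using (isCoprime_iff_aeval_ne_zero_of_isAlgClosed ℂ ℂ f g).1 hcop s
  have haI : a * I ≠ 1 := fun h => by
    simpa [h] using (norm_mul_le a I).trans_lt (mul_lt_one_of_nonneg_of_lt_one_right ha
      (norm_nonneg I) hI)
  rw [eval_sub, eval_smul, smul_eq_mul, ← hs]
  convert mul_ne_zero hg (sub_ne_zero.2 haI.symm) using 1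
  ring

theorem eventually_filter_roots_neg_lt_re_eq (p : ℂ[X]) :
    ∀ᶠ δ in 𝓝[>] (0 : ℝ), p.roots.filter (fun r => -δ < r.re) = p.roots.filter (0 ≤ ·.re) := by
  have hroot : ∀ r ∈ p.roots.toFinset, ∀ᶠ δ in 𝓝[>] (0 : ℝ), (-δ < r.re ↔ 0 ≤ r.re) := by
    intro r _
    rcases le_or_gt 0 r.re with hr | hr
    · filter_upwards [self_mem_nhdsWithin] with δ (hδ : 0 < δ)
      exact iff_of_true (by linarith) hr
    · filter_upwards [Ioo_mem_nhdsGT (neg_pos.2 hr)] with δ hδ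
      exact iff_of_false (by linarith [hδ.2]) hr.not_ge
  filter_upwards [(eventually_all_finset _).2 hroot] with δ hδ
  exact Multiset.filter_congr fun r hr => hδ r (Multiset.mem_toFinset.2 hr)

end Polynomial

section Mgf

theorem Real.exp_mul_sub_one_div_mem_Icc {δ ε : ℝ} (hδ : 0 < δ) (hδε : δ ≤ ε) (y : ℝ) :
    (Real.exp (δ * y) - 1) / δ ∈ Icc y ((Real.exp (ε * y) - 1) / ε) := by
  refine ⟨by rw [le_div_iff₀ hδ]; linarith [Real.add_one_le_exp (δ * y)], ?_⟩
  have hconv : ConvexOn ℝ univ (fun t => Real.exp (t * y)) :=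
    convexOn_exp.comp_linearMap (LinearMap.id.smulRight y)
  simpa using hconv.secant_mono (a := 0) trivial trivial trivial hδ.ne' (hδ.trans_le hδε).ne' hδε

variable {Ω : Type*} [MeasurableSpace Ω] {μ : Measure Ω} [IsProbabilityMeasure μ] {Y : Ω → ℝ}

theorem tendsto_mgf_sub_one_div_nhdsGT_zero (hY : Integrable Y μ) {ε : ℝ} (hε : 0 < ε)
    (hexp : Integrable (fun ω => Real.exp (ε * Y ω)) μ) :
    Tendsto (fun δ => (mgf Y μ δ - 1) / δ) (𝓝[>] 0) (𝓝 μ[Y]) := by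
  have hint : ∀ δ ∈ Ioc 0 ε, Integrable (fun ω => Real.exp (δ * Y ω)) μ := fun δ hδ =>
    integrable_exp_mul_of_le_of_le (by simp) hexp hδ.1.le hδ.2
  have hslope : ∀ δ ∈ Ioc 0 ε, (mgf Y μ δ - 1) / δ = ∫ ω, (Real.exp (δ * Y ω) - 1) / δ ∂μ := by
    intro δ hδ
    rw [integral_div, integral_sub (hint δ hδ) (integrable_const 1)]
    simp [mgf]
  have hIoc : Ioc 0 ε ∈ 𝓝[>] (0:ℝ) := Ioc_mem_nhdsGT hε
  refine Tendsto.congr' (eventuallyEq_of_mem hIoc fun δ hδ => (hslope δ hδ).symm) ?_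
  refine tendsto_integral_filter_of_dominated_convergence
    (fun ω => |Y ω| + |(Real.exp (ε * Y ω) - 1) / ε|) ?_ ?_ ?_ ?_
  · filter_upwards [hIoc] with δ hδ
    exact (((hint δ hδ).sub (integrable_const 1)).div_const δ).aestronglyMeasurable
  · filter_upwards [hIoc] with δ hδ
    refine ae_of_all _ fun ω => ?_
    obtain ⟨hlo, hhi⟩ := Real.exp_mul_sub_one_div_mem_Icc hδ.1 hδ.2 (Y ω)
    exact (abs_le_max_abs_abs hlo hhi).trans (max_le_add_of_nonneg (abs_nonneg _) (abs_nonneg _))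
  · exact hY.abs.add ((hexp.sub (integrable_const 1)).div_const ε).abs
  · refine ae_of_all _ fun ω => ?_
    have hderiv : HasDerivAt (fun δ => Real.exp (δ * Y ω)) (Y ω) 0 := by
      simpa using ((hasDerivAt_id 0).mul_const (Y ω)).exp
    simpa [div_eq_inv_mul] using hderiv.tendsto_slope_zero_right

theorem eventually_mgf_lt_one (hY : Integrable Y μ) (hmean : μ[Y] < 0) {ε : ℝ} (hε : 0 < ε)
    (hexp : Integrable (fun ω => Real.exp (ε * Y ω)) μ) :
    ∀ᶠ δ in 𝓝[>] 0, mgf Y μ δ < 1 := by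
  filter_upwards [(tendsto_mgf_sub_one_div_nhdsGT_zero hY hε hexp).eventually_lt_const hmean,
    self_mem_nhdsWithin] with δ hslope hδ
  simpa using (div_lt_iff₀ hδ).1 hslope

end Mgf

theorem root_count_right_half_plane_general
    {Ω : Type*} [MeasurableSpace Ω] (μ : Measure Ω) [IsProbabilityMeasure μ]
    (Y : Ω → ℝ) (hYint : Integrable Y μ)
    (hYmean : ∫ ω, Y ω ∂μ < 0)
    (f g : Polynomial ℂ) (hcop : IsCoprime f g) (hdeg : f.degree < g.degree)
    (htrans : ∃ ε > (0:ℝ), ∀ s : ℂ, -ε ≤ s.re → s.re ≤ 0 →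
      Integrable (fun ω => Complex.exp (-s * (Y ω : ℂ))) μ ∧
        g.eval s * ∫ ω, Complex.exp (-s * (Y ω : ℂ)) ∂μ = f.eval s) :
    (g.roots.filter (fun r => 0 ≤ r.re)).card =
      ((g - f).roots.filter (fun r => 0 ≤ r.re)).card := by
  obtain ⟨ε, hε, htr⟩ := htrans
  have hexp : Integrable (fun ω => Real.exp (ε * Y ω)) μ := by
    simpa [Complex.norm_exp] using (htr (-ε) (by simp) (by simpa using hε.le)).1.norm
  obtain ⟨δ, hmgf, hg, hgf, hδ, hδε⟩ := ((eventually_mgf_lt_one hYint hYmean hε hexp).and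
    ((eventually_filter_roots_neg_lt_re_eq g).and ((eventually_filter_roots_neg_lt_re_eq
      (g - f)).and (Ioc_mem_nhdsGT hε)))).exists
  have hline : ∀ t ∈ Icc (0 : ℝ) 1, ∀ s ∈ frontier {s : ℂ | -δ < s.re},
      (g - (t : ℂ) • f).eval s ≠ 0 := by
    intro t ht s hs
    rw [Complex.frontier_setOfPred_lt_re, mem_ofPred_eq] at hs
    refine eval_sub_smul_ne_zero hcop ?_ (htr s (by linarith) (by linarith)).2 ?_
    · calc ‖∫ ω, Complex.exp (-s * (Y ω : ℂ)) ∂μ‖ ≤ mgf Y μ (-s).re := norm_complexMGF_le_mgf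
        _ < 1 := by simpa [hs] using hmgf
    · rw [Complex.norm_real, Real.norm_of_nonneg ht.1]
      exact ht.2
  rw [← hg, ← hgf]
  exact card_filter_roots_eq_card_filter_roots_sub (U := {s : ℂ | -δ < s.re}) hdeg hline

/-- If the transform of the (stable) increment `Y` is the rational
function `f/g` on a strip `-ε ≤ Re s ≤ 0`, then `g` and `g - f` have the same number of
roots (with multiplicity) in the closed right half-plane. -/
theorem root_count_right_half_plane
    {Ω : Type*} [MeasurableSpace Ω] (μ : Measure Ω) [IsProbabilityMeasure μ]
    (Y : Ω → ℝ) (hYm : Measurable Y) (hYint : Integrable Y μ)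
    (hYmean : ∫ ω, Y ω ∂μ < 0) (hY0 : μ {ω | Y ω = 0} < 1)
    (f g : Polynomial ℂ) (hcop : IsCoprime f g) (hdeg : f.degree < g.degree)
    (htrans : ∃ ε > (0:ℝ), ∀ s : ℂ, -ε ≤ s.re → s.re ≤ 0 →
      Integrable (fun ω => Complex.exp (-s * (Y ω : ℂ))) μ ∧
        g.eval s * ∫ ω, Complex.exp (-s * (Y ω : ℂ)) ∂μ = f.eval s) :
    (g.roots.filter (fun r => 0 ≤ r.re)).card =
      ((g - f).roots.filter (fun r => 0 ≤ r.re)).card :=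
  root_count_right_half_plane_general μ Y hYint hYmean f g hcop hdeg htrans
end

section
/- Let c > 0, let s ∈ ℂ with s ≠ 0, let N ≥ 1 be an integer, and let A_1,…,A_N and B_1,…,B_N be positive real numbers. Define W_1 = 0 and W_{i+1} = W_i + B_i/c − A_i for 1 ≤ i ≤ N − 1, and assume W_i + B_i/c − A_i ≥ 0 for all 1 ≤ i ≤ N − 1 and that I := A_N − (W_N + B_N/c) ≥ 0. Set t_1 = 0, t_{i+1} = t_i + A_i for 1 ≤ i ≤ N − 1, and P := t_N + W_N + B_N/c. Define V(t) := cW_i + B_i − c(t − t_i) for t ∈ [t_i, t_{i+1}) when i ≤ N − 1, and V(t) := cW_N + B_N − c(t − t_N) for t ∈ [t_N, P). Then ∫_0^P e^{−sV(t)} dt = (1/(cs)) · ∑_{i=1}^{N} e^{−s c W_i} (1 − e^{−s B_i}). -/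
open MeasureTheory Finset Complex

/-!
Between consecutive arrivals the workload decreases linearly at rate `c`, so on each such piece
`e^{-sV}` has the explicit antiderivative `e^{-sV}/(cs)`. Each piece therefore contributes
`(e^{-s V(end)} - e^{-s V(start)})/(cs)`, where `V(start) = cW_i + B_i` and `V(end) = cW_{i+1}`,
the workload found by the next arrival. Since the busy period starts and ends with empty
workload, the end values are a cyclic shift of the values `cW_i`, and the sum rearranges to
`∑ e^{-scW_i}(1 - e^{-sB_i})/(cs)`.
-/

theorem integral_cexp_neg_mul_affine (a b u c : ℝ) {s : ℂ} (hcs : (c : ℂ) * s ≠ 0) :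
    ∫ x in a..b, cexp (-s * ↑(u - c * (x - a))) =
      (cexp (-s * ↑(u - c * (b - a))) - cexp (-s * u)) / (c * s) := by
  have hderiv : ∀ x : ℝ, HasDerivAt (fun y : ℝ => cexp (-s * ↑(u - c * (y - a))) / (c * s))
      (cexp (-s * ↑(u - c * (x - a)))) x := by
    intro x
    have hlin : HasDerivAt (fun y : ℝ => ((u - c * (y - a) : ℝ) : ℂ)) (-c : ℝ) x := by
      simpa using (((hasDerivAt_id x).sub_const a).const_mul c).const_sub u |>.ofReal_comp
    refine (((hlin.const_mul (-s)).cexp).div_const (c * s)).congr_deriv ?_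
    rw [div_eq_iff hcs]
    push_cast
    ring
  rw [intervalIntegral.integral_eq_sub_of_hasDerivAt (fun x _ => hderiv x)
    ((by fun_prop : Continuous _).intervalIntegrable _ _), sub_div]
  simp

theorem integral_cexp_neg_mul_of_eqOn_Ico_affine {f : ℝ → ℝ} {a b u c : ℝ} {s : ℂ}
    (hcs : (c : ℂ) * s ≠ 0) (hab : a ≤ b)
    (hf : Set.EqOn f (fun x => u - c * (x - a)) (Set.Ico a b)) :
    IntervalIntegrable (fun x => cexp (-s * f x)) volume a b ∧
      ∫ x in a..b, cexp (-s * f x) =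
        (cexp (-s * ↑(u - c * (b - a))) - cexp (-s * u)) / (c * s) := by
  have heq : Set.EqOn (fun x => cexp (-s * f x)) (fun x => cexp (-s * ↑(u - c * (x - a))))
      (Set.Ico a b) :=
    fun x hx => by simp only [hf hx]
  constructor
  · rw [intervalIntegrable_iff_integrableOn_Ico_of_le hab]
    exact ((by fun_prop : Continuous fun x : ℝ => cexp (-s * ↑(u - c * (x - a)))).integrableOn_Icc
      |>.mono_set Set.Ico_subset_Icc_self).congr_fun heq.symm measurableSet_Ico
  · rw [intervalIntegral.integral_of_le hab, ← integral_Ico_eq_integral_Ioc,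
      setIntegral_congr_fun measurableSet_Ico heq, integral_Ico_eq_integral_Ioc,
      ← intervalIntegral.integral_of_le hab, integral_cexp_neg_mul_affine a b u c hcs]

theorem integral_cexp_neg_mul_of_piecewise_affine {f : ℝ → ℝ} {a u : ℕ → ℝ} {c : ℝ} {s : ℂ}
    {n : ℕ} (hcs : (c : ℂ) * s ≠ 0) (ha : ∀ k < n, a k ≤ a (k + 1))
    (hf : ∀ k < n, Set.EqOn f (fun x => u k - c * (x - a k)) (Set.Ico (a k) (a (k + 1)))) :
    ∫ x in a 0..a n, cexp (-s * f x) =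
      ∑ k ∈ range n, (cexp (-s * ↑(u k - c * (a (k + 1) - a k))) - cexp (-s * u k)) / (c * s) := by
  have hpiece k (hk : k < n) :=
    integral_cexp_neg_mul_of_eqOn_Ico_affine (s := s) hcs (ha k hk) (hf k hk)
  rw [← intervalIntegral.sum_integral_adjacent_intervals fun k hk => (hpiece k hk).1]
  exact sum_congr rfl fun k hk => (hpiece k (mem_range.1 hk)).2

theorem sum_range_succ_eq_of_rotate {M : Type*} [AddCommMonoid M] {E G : ℕ → M} {n : ℕ}
    (hE : ∀ k < n, E k = G (k + 1)) (hlast : E n = G 0) :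
    ∑ k ∈ range (n + 1), E k = ∑ k ∈ range (n + 1), G k := by
  rw [sum_range_succ, sum_range_succ', hlast, sum_congr rfl fun k hk => hE k (mem_range.1 hk)]

theorem integral_cexp_neg_mul_of_sawtooth {f : ℝ → ℝ} {a w b : ℕ → ℝ} {c : ℝ} {s : ℂ} {n : ℕ}
    (hcs : (c : ℂ) * s ≠ 0) (ha : ∀ k < n + 1, a k ≤ a (k + 1))
    (hf : ∀ k < n + 1,
      Set.EqOn f (fun x => w k + b k - c * (x - a k)) (Set.Ico (a k) (a (k + 1))))
    (hw : ∀ k < n, w k + b k - c * (a (k + 1) - a k) = w (k + 1))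
    (hw_last : w n + b n - c * (a (n + 1) - a n) = w 0) :
    ∫ x in a 0..a (n + 1), cexp (-s * f x) =
      1 / (c * s) * ∑ k ∈ range (n + 1), cexp (-s * w k) * (1 - cexp (-s * b k)) := by
  have hends := sum_range_succ_eq_of_rotate (n := n)
    (E := fun k => cexp (-s * ↑(w k + b k - c * (a (k + 1) - a k))))
    (G := fun k => cexp (-s * w k)) (fun k hk => by simp only [hw k hk]) (by simp only [hw_last])
  rw [integral_cexp_neg_mul_of_piecewise_affine hcs ha hf, ← sum_div, sum_sub_distrib, hends,
    ← sum_sub_distrib, one_div_mul_eq_div]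
  refine congrArg (· / _) (sum_congr rfl fun k _ => ?_)
  rw [mul_one_sub, ← Complex.exp_add]
  push_cast
  ring_nf

theorem sum_Icc_one_eq_sum_range {M : Type*} [AddCommMonoid M] (f : ℕ → M) (n : ℕ) :
    ∑ i ∈ Icc 1 n, f i = ∑ k ∈ range n, f (k + 1) := by
  rw [range_eq_Ico, sum_Ico_add', zero_add, Finset.Ico_add_one_right_eq_Icc]

/-- Pieces are counted from `0`: piece `k ≤ n` starts at the arrival epoch `t (k + 1)`, and from
`k = n + 1` on the breakpoint stays at the end `P` of the busy period. -/
def busyBreakpoint (t : ℕ → ℝ) (P : ℝ) (n k : ℕ) : ℝ :=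
  if k ≤ n then t (k + 1) else P

theorem busyBreakpoint_of_le {t : ℕ → ℝ} {P : ℝ} {n k : ℕ} (hk : k ≤ n) :
    busyBreakpoint t P n k = t (k + 1) :=
  if_pos hk

theorem busyBreakpoint_succ_self (t : ℕ → ℝ) (P : ℝ) (n : ℕ) :
    busyBreakpoint t P n (n + 1) = P :=
  if_neg (by omega)

theorem monotone_busyBreakpoint {t : ℕ → ℝ} {P : ℝ} {n : ℕ}
    (ht : ∀ k < n, t (k + 1) ≤ t (k + 2)) (hP : t (n + 1) ≤ P) :
    Monotone (busyBreakpoint t P n) := by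
  refine monotone_nat_of_le_succ fun k => ?_
  rcases lt_trichotomy k n with hk | rfl | hk
  · rw [busyBreakpoint_of_le hk.le, busyBreakpoint_of_le hk]
    exact ht k hk
  · rwa [busyBreakpoint_of_le le_rfl, busyBreakpoint_succ_self]
  · exact (if_neg (by omega)).trans_le (if_neg (by omega)).ge

theorem busy_period_workload_transform_general
    (c : ℝ) (hc : 0 < c) (s : ℂ) (hs : s ≠ 0)
    (N : ℕ) (hN : 1 ≤ N) (A B W t : ℕ → ℝ)
    (hA : ∀ i, 1 ≤ i → i ≤ N → 0 < A i)
    (hB : ∀ i, 1 ≤ i → i ≤ N → 0 < B i)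
    (hW1 : W 1 = 0)
    (hWrec : ∀ i, 1 ≤ i → i < N → W (i + 1) = W i + B i / c - A i)
    (hWnonneg : ∀ i, 1 ≤ i → i < N → 0 ≤ W i + B i / c - A i)
    (ht1 : t 1 = 0)
    (htrec : ∀ i, 1 ≤ i → i < N → t (i + 1) = t i + A i)
    (P : ℝ) (hP : P = t N + W N + B N / c)
    (V : ℝ → ℝ)
    (hV : ∀ i, 1 ≤ i → i < N → ∀ x ∈ Set.Ico (t i) (t (i + 1)),
      V x = c * W i + B i - c * (x - t i))
    (hVN : ∀ x ∈ Set.Ico (t N) P, V x = c * W N + B N - c * (x - t N)) :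
    ∫ x in Set.Ico (0:ℝ) P, Complex.exp (-s * (V x : ℂ)) =
      (1 / (c * s)) * ∑ i ∈ Finset.Icc 1 N,
        Complex.exp (-s * ((c * W i : ℝ) : ℂ)) * (1 - Complex.exp (-s * ((B i : ℝ) : ℂ))) := by
  obtain ⟨n, rfl⟩ : ∃ n, N = n + 1 := ⟨N - 1, by omega⟩
  have hWlast : 0 ≤ W (n + 1) := by
    rcases n with _ | m
    · exact hW1.ge
    · exact hWrec (m + 1) (by omega) (by omega) ▸ hWnonneg (m + 1) (by omega) (by omega)
  have ha : Monotone (busyBreakpoint t P n) := monotone_busyBreakpoint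
    (fun k hk => by linarith [htrec (k + 1) (by omega) (by omega), hA (k + 1) (by omega) (by omega)])
    (by linarith [div_pos (hB (n + 1) (by omega) le_rfl) hc])
  have hVa : ∀ k < n + 1, Set.EqOn V
      (fun x => c * W (k + 1) + B (k + 1) - c * (x - busyBreakpoint t P n k))
      (Set.Ico (busyBreakpoint t P n k) (busyBreakpoint t P n (k + 1))) := by
    intro k hk x hx
    rcases Nat.lt_succ_iff_lt_or_eq.1 hk with hk | rfl
    · simp only [busyBreakpoint_of_le hk.le, busyBreakpoint_of_le hk] at hx ⊢
      exact hV (k + 1) (by omega) (by omega) x hx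
    · simp only [busyBreakpoint_of_le le_rfl, busyBreakpoint_succ_self] at hx ⊢
      exact hVN x hx
  have hIco : ∫ x in Set.Ico (0:ℝ) P, cexp (-s * V x) =
      ∫ x in busyBreakpoint t P n 0..busyBreakpoint t P n (n + 1), cexp (-s * V x) := by
    rw [intervalIntegral.integral_of_le (ha (Nat.zero_le _)), ← integral_Ico_eq_integral_Ioc,
      busyBreakpoint_of_le n.zero_le, ht1, busyBreakpoint_succ_self]
  rw [hIco,
    integral_cexp_neg_mul_of_sawtooth (mul_ne_zero (by exact_mod_cast hc.ne') hs)
      (fun k _ => ha k.le_succ) hVa, sum_Icc_one_eq_sum_range]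
  · intro k hk
    rw [busyBreakpoint_of_le hk.le, busyBreakpoint_of_le hk, htrec (k + 1) (by omega) (by omega),
      hWrec (k + 1) (by omega) (by omega)]
    field_simp
    ring
  · rw [busyBreakpoint_of_le le_rfl, busyBreakpoint_succ_self, hP, hW1]
    field_simp
    ring

/-- Pathwise identity for the integral of `e^{-sV(t)}` over one busy
period of a G/G/1 queue served at speed `c`. -/
theorem busy_period_workload_transform
    (c : ℝ) (hc : 0 < c) (s : ℂ) (hs : s ≠ 0)
    (N : ℕ) (hN : 1 ≤ N) (A B W t : ℕ → ℝ)
    (hA : ∀ i, 1 ≤ i → i ≤ N → 0 < A i)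
    (hB : ∀ i, 1 ≤ i → i ≤ N → 0 < B i)
    (hW1 : W 1 = 0)
    (hWrec : ∀ i, 1 ≤ i → i < N → W (i + 1) = W i + B i / c - A i)
    (hWnonneg : ∀ i, 1 ≤ i → i < N → 0 ≤ W i + B i / c - A i)
    (hI : 0 ≤ A N - (W N + B N / c))
    (ht1 : t 1 = 0)
    (htrec : ∀ i, 1 ≤ i → i < N → t (i + 1) = t i + A i)
    (P : ℝ) (hP : P = t N + W N + B N / c)
    (V : ℝ → ℝ)
    (hV : ∀ i, 1 ≤ i → i < N → ∀ x ∈ Set.Ico (t i) (t (i + 1)),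
      V x = c * W i + B i - c * (x - t i))
    (hVN : ∀ x ∈ Set.Ico (t N) P, V x = c * W N + B N - c * (x - t N)) :
    ∫ x in Set.Ico (0:ℝ) P, Complex.exp (-s * (V x : ℂ)) =
      (1 / (c * s)) * ∑ i ∈ Finset.Icc 1 N,
        Complex.exp (-s * ((c * W i : ℝ) : ℂ)) * (1 - Complex.exp (-s * ((B i : ℝ) : ℂ))) :=
  busy_period_workload_transform_general c hc s hs N hN A B W t hA hB hW1 hWrec hWnonneg ht1 htrec P
    hP V hV hVN
end

section
/- Let K ≥ 1 be an integer, let π_1,…,π_K ≥ 0 with ∑_{i=1}^K π_i = 1, and let λ > 0, μ > 0. For 1 ≤ i, j ≤ K write Φ(i,j) := ∫∫ φ(x − y) d(Gamma(i,λ))(x) d(Gamma(j,μ))(y). Then for every convex function φ : ℝ → ℝ such that (x,y) ↦ φ(x−y) is integrable with respect to Gamma(i,λ) ⊗ Gamma(j,μ) for all 1 ≤ i, j ≤ K: ∑_{i=1}^K π_i Φ(i,i) ≤ ∑_{i=1}^K ∑_{j=1}^K π_i π_j Φ(i,j). -/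
/-!
Let `X, B, Y, E` be independent with `X ~ Γ(i, λ)`, `B ~ Γ(j - i, λ)`, `Y ~ Γ(i, μ)`,
`E ~ Γ(j - i, μ)`, so that `X + B ~ Γ(j, λ)` and `Y + E ~ Γ(j, μ)`. Since `φ` is convex,
`(x, y) ↦ φ (x - y)` is submodular, and evaluating this at the four corners
`(X, Y), (X + B, Y + E), (X, Y + E), (X + B, Y)` gives, after taking expectations,
`Φ(i,i) + Φ(j,j) ≤ Φ(i,j) + Φ(j,i)`. Averaging this over `π ⊗ π` yields the claim.
-/

open MeasureTheory ProbabilityTheory Real Set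

lemma ConvexOn.map_add_map_le_of_add_eq {s : Set ℝ} {f : ℝ → ℝ} (hf : ConvexOn ℝ s f)
    {u w x y : ℝ} (hu : u ∈ s) (hw : w ∈ s) (hx : x ∈ Icc u w) (hy : y ∈ Icc u w)
    (hxy : x + y = u + w) : f x + f y ≤ f u + f w := by
  rcases hx.1.trans hx.2 |>.eq_or_lt with rfl | huw
  · obtain rfl : x = u := le_antisymm hx.2 hx.1
    obtain rfl : y = x := le_antisymm hy.2 hy.1
    rfl
  have hwu : 0 < w - u := sub_pos.mpr huw
  set θ := (w - x) / (w - u)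
  have hθ₀ : 0 ≤ θ := div_nonneg (by linarith [hx.2]) hwu.le
  have hθ₁ : 0 ≤ 1 - θ := by
    rw [sub_nonneg, div_le_one hwu]; linarith [hx.1]
  have hx' : θ • u + (1 - θ) • w = x := by
    simp only [θ, smul_eq_mul]; field_simp; ring
  have hy' : (1 - θ) • u + θ • w = y := by
    rw [show y = u + w - x by linarith]; simp only [θ, smul_eq_mul]; field_simp; ring
  have h₁ := hf.2 hu hw hθ₀ hθ₁ (by ring)
  have h₂ := hf.2 hu hw hθ₁ hθ₀ (by ring)
  rw [hx'] at h₁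
  rw [hy'] at h₂
  simp only [smul_eq_mul] at h₁ h₂
  linarith

lemma ConvexOn.map_sub_add_map_sub_le {φ : ℝ → ℝ} (hφ : ConvexOn ℝ univ φ) {x y b e : ℝ}
    (hb : 0 ≤ b) (he : 0 ≤ e) :
    φ (x - y) + φ (x + b - (y + e)) ≤ φ (x - (y + e)) + φ (x + b - y) :=
  hφ.map_add_map_le_of_add_eq (mem_univ _) (mem_univ _)
    ⟨by linarith, by linarith⟩ ⟨by linarith, by linarith⟩ (by ring)

lemma Finset.sum_mul_diag_le_sum_sum_mul {ι : Type*} {s : Finset ι} {p : ι → ℝ}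
    {Φ : ι → ι → ℝ} (hp : ∀ i ∈ s, 0 ≤ p i) (hp₁ : ∑ i ∈ s, p i = 1)
    (hΦ : ∀ i ∈ s, ∀ j ∈ s, Φ i i + Φ j j ≤ Φ i j + Φ j i) :
    ∑ i ∈ s, p i * Φ i i ≤ ∑ i ∈ s, ∑ j ∈ s, p i * p j * Φ i j := by
  have hdiag : ∀ ψ : ι → ℝ, ∑ i ∈ s, ∑ j ∈ s, p i * p j * ψ i = ∑ i ∈ s, p i * ψ i := by
    intro ψ
    refine Finset.sum_congr rfl fun i _ => ?_
    rw [← Finset.sum_mul, ← Finset.mul_sum, hp₁, mul_one]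
  have hswap : ∀ Ψ : ι → ι → ℝ,
      ∑ i ∈ s, ∑ j ∈ s, p i * p j * Ψ j i = ∑ i ∈ s, ∑ j ∈ s, p i * p j * Ψ i j := by
    intro Ψ
    rw [Finset.sum_comm]
    exact Finset.sum_congr rfl fun i _ => Finset.sum_congr rfl fun j _ => by ring
  have hle : ∑ i ∈ s, ∑ j ∈ s, p i * p j * (Φ i i + Φ j j) ≤
      ∑ i ∈ s, ∑ j ∈ s, p i * p j * (Φ i j + Φ j i) :=
    Finset.sum_le_sum fun i hi => Finset.sum_le_sum fun j hj =>
      mul_le_mul_of_nonneg_left (hΦ i hi j hj) (mul_nonneg (hp i hi) (hp j hj))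
  simp only [mul_add, Finset.sum_add_distrib, hdiag (fun i => Φ i i),
    hswap (fun i j => Φ i i), hswap Φ] at hle
  linarith

lemma integral_add_integral_conv_prod_conv_le {α β γ δ : Measure ℝ} [IsProbabilityMeasure α]
    [IsProbabilityMeasure β] [IsProbabilityMeasure γ] [IsProbabilityMeasure δ] {f : ℝ × ℝ → ℝ}
    (hf : ∀ x y b e, 0 ≤ b → 0 ≤ e → f (x, y) + f (x + b, y + e) ≤ f (x, y + e) + f (x + b, y))
    (hβ : ∀ᵐ b ∂β, 0 ≤ b) (hδ : ∀ᵐ e ∂δ, 0 ≤ e)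
    (h₁ : Integrable f (α.prod γ)) (h₂ : Integrable f ((α ∗ β).prod (γ ∗ δ)))
    (h₃ : Integrable f (α.prod (γ ∗ δ))) (h₄ : Integrable f ((α ∗ β).prod γ)) :
    ∫ p, f p ∂(α.prod γ) + ∫ p, f p ∂((α ∗ β).prod (γ ∗ δ)) ≤
      ∫ p, f p ∂(α.prod (γ ∗ δ)) + ∫ p, f p ∂((α ∗ β).prod γ) := by
  set P := (α.prod β).prod (γ.prod δ)
  have hfst : ∀ {μ ν : Measure ℝ} [SFinite μ] [IsProbabilityMeasure ν],
      MeasurePreserving Prod.fst (μ.prod ν) μ := measurePreserving_fst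
  have hadd : ∀ {μ ν : Measure ℝ},
      MeasurePreserving (fun p : ℝ × ℝ => p.1 + p.2) (μ.prod ν) (μ ∗ ν) :=
    ⟨by fun_prop, rfl⟩
  have hcomp : ∀ {ν : Measure (ℝ × ℝ)} {T : (ℝ × ℝ) × (ℝ × ℝ) → ℝ × ℝ},
      MeasurePreserving T P ν → Integrable f ν →
        ∫ p, f p ∂ν = ∫ ω, (f ∘ T) ω ∂P ∧ Integrable (f ∘ T) P :=
    fun hT hfν => ⟨by
      rw [← hT.map_eq, integral_map hT.measurable.aemeasurable (hT.map_eq ▸ hfν.1)]; rfl,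
      (hT.integrable_comp hfν.1).mpr hfν⟩
  obtain ⟨e₁, i₁⟩ := hcomp (hfst.prod hfst) h₁
  obtain ⟨e₂, i₂⟩ := hcomp (hadd.prod hadd) h₂
  obtain ⟨e₃, i₃⟩ := hcomp (hfst.prod hadd) h₃
  obtain ⟨e₄, i₄⟩ := hcomp (hadd.prod hfst) h₄
  have hP : ∀ᵐ ω ∂P, 0 ≤ ω.1.2 ∧ 0 ≤ ω.2.2 :=
    ((measurePreserving_snd.comp measurePreserving_fst).quasiMeasurePreserving.ae hβ).and
      ((measurePreserving_snd.comp measurePreserving_snd).quasiMeasurePreserving.ae hδ)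
  rw [e₁, e₂, e₃, e₄, ← integral_add i₁ i₂, ← integral_add i₃ i₄]
  refine integral_mono_ae (i₁.add i₂) (i₃.add i₄) ?_
  filter_upwards [hP] with ω hω
  exact hf _ _ _ _ hω.1 hω.2

namespace ProbabilityTheory

instance (a r : ℝ) : SFinite (gammaMeasure a r) := by
  unfold gammaMeasure; infer_instance

lemma measurable_gammaPDF (a r : ℝ) : Measurable (gammaPDF a r) :=
  (measurable_gammaPDFReal a r).ennreal_ofReal

lemma ae_nonneg_gammaMeasure (a r : ℝ) : ∀ᵐ x ∂gammaMeasure a r, 0 ≤ x := by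
  rw [gammaMeasure, ae_withDensity_iff (measurable_gammaPDF a r)]
  exact ae_of_all _ fun x hx => not_lt.mp fun hx' => hx (gammaPDF_of_neg hx')

lemma gammaPDF_mul_gammaPDF_one_neg_add {a r : ℝ} (ha : 0 < a) (hr : 0 < r) (y z : ℝ) :
    gammaPDF a r y * gammaPDF 1 r (-y + z) = (Icc 0 z).indicator
      (fun y => ENNReal.ofReal (r ^ (a + 1) / Gamma a * exp (-(r * z)) * y ^ (a - 1))) y := by
  by_cases hy : y ∈ Icc 0 z
  · rw [indicator_of_mem hy, gammaPDF_of_nonneg hy.1, gammaPDF_of_nonneg (by linarith [hy.2]),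
      ← ENNReal.ofReal_mul (by have := hy.1; positivity)]
    congr 1
    simp only [Gamma_one, sub_self, rpow_zero, rpow_one, rpow_add_one hr.ne']
    rw [show exp (-(r * z)) = exp (-(r * y)) * exp (-(r * (-y + z))) by
      rw [← exp_add]; ring_nf]
    ring
  · rw [indicator_of_notMem hy]
    rcases lt_or_ge y 0 with hy' | hy'
    · simp [gammaPDF_of_neg hy']
    · simp [gammaPDF_of_neg (show -y + z < 0 by simp_all)]

lemma gammaPDF_lconvolution_gammaPDF_one {a r : ℝ} (ha : 0 < a) (hr : 0 < r) :
    gammaPDF a r ⋆ₗ gammaPDF 1 r = gammaPDF (a + 1) r := by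
  ext z
  simp only [lconvolution_def, gammaPDF_mul_gammaPDF_one_neg_add ha hr]
  rw [lintegral_indicator measurableSet_Icc]
  rcases lt_or_ge z 0 with hz | hz
  · simp [Icc_eq_empty_of_lt hz, gammaPDF_of_neg hz]
  set c := r ^ (a + 1) / Gamma a * exp (-(r * z))
  have hintegral : ∫ y in Icc 0 z, c * y ^ (a - 1) = c * (z ^ a / a) := by
    rw [integral_const_mul, integral_Icc_eq_integral_Ioc, ← intervalIntegral.integral_of_le hz,
      integral_rpow (by left; linarith)]
    simp [zero_rpow ha.ne']
  rw [← ofReal_integral_eq_lintegral_ofReal, hintegral, gammaPDF_of_nonneg hz,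
    Gamma_add_one ha.ne', add_sub_cancel_right]
  · congr 1
    have := (Gamma_pos_of_pos ha).ne'
    simp only [c]
    field_simp
  · exact ((intervalIntegrable_iff_integrableOn_Icc_of_le hz).mp
      (intervalIntegral.intervalIntegrable_rpow' (by linarith))).const_mul c
  · filter_upwards [ae_restrict_mem measurableSet_Icc] with y hy
    have := hy.1
    positivity

lemma gammaMeasure_conv_gammaMeasure_one {a r : ℝ} (ha : 0 < a) (hr : 0 < r) :
    gammaMeasure a r ∗ gammaMeasure 1 r = gammaMeasure (a + 1) r := by
  rw [gammaMeasure, gammaMeasure, conv_withDensity_eq_lconvolution (measurable_gammaPDF a r)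
    (measurable_gammaPDF 1 r), gammaPDF_lconvolution_gammaPDF_one ha hr, gammaMeasure]

lemma gammaMeasure_conv_gammaMeasure_natCast {a r : ℝ} (ha : 0 < a) (hr : 0 < r) {n : ℕ}
    (hn : 1 ≤ n) : gammaMeasure a r ∗ gammaMeasure n r = gammaMeasure (a + n) r := by
  induction n, hn using Nat.le_induction with
  | base => simpa using gammaMeasure_conv_gammaMeasure_one ha hr
  | succ n hn ih =>
    have hn' : (0 : ℝ) < n := by exact_mod_cast hn
    rw [Nat.cast_succ, ← gammaMeasure_conv_gammaMeasure_one hn' hr, ← Measure.conv_assoc, ih,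
      gammaMeasure_conv_gammaMeasure_one (by positivity) hr, add_assoc]

end ProbabilityTheory

theorem positively_correlated_convex_order_general
    (K : ℕ) (pr : ℕ → ℝ)
    (hpr : ∀ i ∈ Finset.Icc 1 K, 0 ≤ pr i)
    (hprsum : ∑ i ∈ Finset.Icc 1 K, pr i = 1)
    (lam mu : ℝ) (hlam : 0 < lam) (hmu : 0 < mu)
    (φ : ℝ → ℝ) (hconv : ConvexOn ℝ Set.univ φ)
    (hint : ∀ i ∈ Finset.Icc 1 K, ∀ j ∈ Finset.Icc 1 K,
      Integrable (fun p : ℝ × ℝ => φ (p.1 - p.2))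
        ((gammaMeasure (i : ℝ) lam).prod (gammaMeasure (j : ℝ) mu))) :
    ∑ i ∈ Finset.Icc 1 K, pr i *
        ∫ p : ℝ × ℝ, φ (p.1 - p.2) ∂((gammaMeasure (i : ℝ) lam).prod (gammaMeasure (i : ℝ) mu)) ≤
      ∑ i ∈ Finset.Icc 1 K, ∑ j ∈ Finset.Icc 1 K, pr i * pr j *
        ∫ p : ℝ × ℝ, φ (p.1 - p.2) ∂((gammaMeasure (i : ℝ) lam).prod (gammaMeasure (j : ℝ) mu)) := by
  refine Finset.sum_mul_diag_le_sum_sum_mul (s := Finset.Icc 1 K) (p := pr)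
    (Φ := fun i j => ∫ p : ℝ × ℝ, φ (p.1 - p.2)
      ∂((gammaMeasure (i : ℝ) lam).prod (gammaMeasure (j : ℝ) mu)))
    hpr hprsum fun i hi j hj => ?_
  wlog hij : i ≤ j generalizing i j
  · linarith [this j hj i hi (le_of_not_ge hij)]
  obtain ⟨n, rfl⟩ := Nat.exists_eq_add_of_le hij
  rcases Nat.eq_zero_or_pos n with rfl | hn
  · simp
  have hi0 : (0 : ℝ) < i := by exact_mod_cast (Finset.mem_Icc.mp hi).1
  have hn0 : (0 : ℝ) < n := by exact_mod_cast hn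
  have := isProbabilityMeasure_gammaMeasure hi0 hlam
  have := isProbabilityMeasure_gammaMeasure hi0 hmu
  have := isProbabilityMeasure_gammaMeasure hn0 hlam
  have := isProbabilityMeasure_gammaMeasure hn0 hmu
  have hsum := integral_add_integral_conv_prod_conv_le (α := gammaMeasure i lam)
    (β := gammaMeasure n lam) (γ := gammaMeasure i mu) (δ := gammaMeasure n mu)
    (f := fun p => φ (p.1 - p.2))
    (fun x y b e hb he => hconv.map_sub_add_map_sub_le hb he)
    (ae_nonneg_gammaMeasure _ _) (ae_nonneg_gammaMeasure _ _)
  simp only [gammaMeasure_conv_gammaMeasure_natCast hi0 hlam hn,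
    gammaMeasure_conv_gammaMeasure_natCast hi0 hmu hn, ← Nat.cast_add] at hsum
  exact hsum (hint i hi i hi) (hint _ hj _ hj) (hint i hi _ hj) (hint _ hj i hi)

/-- Convex-order inequality `D₊ ≼_cx D₀`: for any convex test function
`φ`, the `π`-average of `Φ(i,i)` is at most the `π ⊗ π`-average of `Φ(i,j)`, where
`Φ(i,j) = ∫∫ φ(x - y) dErlang(i,λ)(x) dErlang(j,μ)(y)`. -/
theorem positively_correlated_convex_order
    (K : ℕ) (hK : 1 ≤ K) (pr : ℕ → ℝ)
    (hpr : ∀ i ∈ Finset.Icc 1 K, 0 ≤ pr i)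
    (hprsum : ∑ i ∈ Finset.Icc 1 K, pr i = 1)
    (lam mu : ℝ) (hlam : 0 < lam) (hmu : 0 < mu)
    (φ : ℝ → ℝ) (hconv : ConvexOn ℝ Set.univ φ)
    (hint : ∀ i ∈ Finset.Icc 1 K, ∀ j ∈ Finset.Icc 1 K,
      Integrable (fun p : ℝ × ℝ => φ (p.1 - p.2))
        ((gammaMeasure (i : ℝ) lam).prod (gammaMeasure (j : ℝ) mu))) :
    ∑ i ∈ Finset.Icc 1 K, pr i *
        ∫ p : ℝ × ℝ, φ (p.1 - p.2) ∂((gammaMeasure (i : ℝ) lam).prod (gammaMeasure (i : ℝ) mu)) ≤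
      ∑ i ∈ Finset.Icc 1 K, ∑ j ∈ Finset.Icc 1 K, pr i * pr j *
        ∫ p : ℝ × ℝ, φ (p.1 - p.2) ∂((gammaMeasure (i : ℝ) lam).prod (gammaMeasure (j : ℝ) mu)) :=
  positively_correlated_convex_order_general K pr hpr hprsum lam mu hlam hmu φ hconv hint
end
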